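/- Let V be an algebra of differential functions extending R_ℓ, and let H(∂) be an ℓ×ℓ matrix differential operator over V such that H(∂)(δf/δu) = 0 for every f ∈ V, where δ/δu is the variational derivative. Then H(∂) = 0. -/
import Mathlib


/-- An algebra of differential functions in `ℓ` variables (see the paper):
a commutative differential algebra `(V, d)` with commuting derivations
`pd i n = ∂/∂u_i^{(n)}`, each element depending on finitely many variables,
satisfying `[∂/∂u_i^{(n)}, ∂] = ∂/∂u_i^{(n−1)}`, and containing the differential
variables `u_i` (so `V` extends the differential polynomial algebra `R_ℓ`). -/
structure ADF (ℓ : ℕ) (V : Type) [CommRing V] where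
  d : V → V
  d_add : ∀ a b, d (a + b) = d a + d b
  d_mul : ∀ a b, d (a * b) = d a * b + a * d b
  pd : Fin ℓ → ℕ → V → V
  pd_add : ∀ i n a b, pd i n (a + b) = pd i n a + pd i n b
  pd_mul : ∀ i n a b, pd i n (a * b) = pd i n a * b + a * pd i n b
  pd_comm : ∀ i n j m f, pd i n (pd j m f) = pd j m (pd i n f)
  finite_dep : ∀ f : V, ∃ M : ℕ, ∀ i n, M ≤ n → pd i n f = 0
  pd_d : ∀ i n f, pd i (n + 1) (d f) = d (pd i (n + 1) f) + pd i n f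
  pd_d0 : ∀ i f, pd i 0 (d f) = d (pd i 0 f)
  u : Fin ℓ → V
  pd_u : ∀ i n j m, pd i n (d^[m] (u j)) = if i = j ∧ n = m then 1 else 0

namespace ADF

variable {ℓ : ℕ} {V : Type} [CommRing V] (A : ADF ℓ V)

lemma d_zero : A.d 0 = 0 := by
  have h := A.d_add 0 0
  rw [add_zero] at h
  have h2 : A.d 0 + 0 = A.d 0 + A.d 0 := by rw [add_zero]; exact h
  exact (add_left_cancel h2).symm

lemma pd_zero (i n) : A.pd i n 0 = 0 := by
  have h := A.pd_add i n 0 0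
  rw [add_zero] at h
  have h2 : A.pd i n 0 + 0 = A.pd i n 0 + A.pd i n 0 := by rw [add_zero]; exact h
  exact (add_left_cancel h2).symm

lemma d_one : A.d 1 = 0 := by
  have h := A.d_mul 1 1
  simp only [mul_one, one_mul] at h
  have h2 : A.d 1 + 0 = A.d 1 + A.d 1 := by rw [add_zero]; exact h
  exact (add_left_cancel h2).symm

lemma pd_one (i n) : A.pd i n 1 = 0 := by
  have h := A.pd_mul i n 1 1
  simp only [mul_one, one_mul] at h
  have h2 : A.pd i n 1 + 0 = A.pd i n 1 + A.pd i n 1 := by rw [add_zero]; exact h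
  exact (add_left_cancel h2).symm

lemma d_neg (a : V) : A.d (-a) = -A.d a := by
  have h := A.d_add a (-a)
  rw [add_neg_cancel, A.d_zero] at h
  linear_combination -h

lemma pd_neg (i n) (a : V) : A.pd i n (-a) = -A.pd i n a := by
  have h := A.pd_add i n a (-a)
  rw [add_neg_cancel, A.pd_zero] at h
  linear_combination -h

lemma d_negOnePow (m : ℕ) : A.d ((-1 : V) ^ m) = 0 := by
  induction m with
  | zero => rw [pow_zero]; exact A.d_one
  | succ k ih =>
    rw [pow_succ, A.d_mul, ih, zero_mul, A.d_neg, A.d_one, neg_zero, mul_zero, add_zero]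

lemma pd_negOnePow (i n) (m : ℕ) : A.pd i n ((-1 : V) ^ m) = 0 := by
  induction m with
  | zero => rw [pow_zero]; exact A.pd_one i n
  | succ k ih =>
    rw [pow_succ, A.pd_mul, ih, zero_mul, A.pd_neg, A.pd_one, neg_zero, mul_zero, add_zero]

lemma d_two : A.d 2 = 0 := by
  have h : (2 : V) = 1 + 1 := by norm_num
  rw [h, A.d_add, A.d_one, add_zero]

lemma pd_two (i n) : A.pd i n 2 = 0 := by
  have h : (2 : V) = 1 + 1 := by norm_num
  rw [h, A.pd_add, A.pd_one, add_zero]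

lemma d_c (m : ℕ) : A.d ((-1 : V) ^ m * 2) = 0 := by
  rw [A.d_mul, A.d_negOnePow, A.d_two, zero_mul, mul_zero, add_zero]

lemma pd_c (i n) (m : ℕ) : A.pd i n ((-1 : V) ^ m * 2) = 0 := by
  rw [A.pd_mul, A.pd_negOnePow, A.pd_two, zero_mul, mul_zero, add_zero]

lemma dit_zero (n : ℕ) : A.d^[n] 0 = 0 := by
  induction n with
  | zero => rfl
  | succ k ih => rw [Function.iterate_succ_apply', ih, A.d_zero]

lemma dit_const_mul {c : V} (hc : A.d c = 0) (n : ℕ) (y : V) :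
    A.d^[n] (c * y) = c * A.d^[n] y := by
  induction n with
  | zero => rfl
  | succ k ih =>
    rw [Function.iterate_succ_apply', ih, A.d_mul, hc, zero_mul, zero_add,
      Function.iterate_succ_apply']

/-- `pd i n` as an additive monoid hom. -/
def pdHom (i : Fin ℓ) (n : ℕ) : V →+ V where
  toFun := A.pd i n
  map_zero' := A.pd_zero i n
  map_add' := A.pd_add i n

@[simp] lemma pdHom_apply (i : Fin ℓ) (n : ℕ) (a : V) : A.pdHom i n a = A.pd i n a := rfl

end ADF

/-- let `V` be an algebra of differential functions extending `R_ℓ` and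
`H(∂)` an ℓ×ℓ matrix differential operator over `V` such that `H(∂)(δf/δu) = 0` for
every `f ∈ V` (where `δf/δu_j = Σ_{k<M} (−∂)^k ∂f/∂u_j^{(k)}` for any bound `M` on the
differential variables occurring in `f`).  Then `H(∂) = 0`. -/
theorem stmt_11 {ℓ N : ℕ} {V : Type} [CommRing V] [CharZero V] [NoZeroDivisors V]
    (A : ADF ℓ V)
    (H : Fin (N + 1) → Matrix (Fin ℓ) (Fin ℓ) V)
    (hH : ∀ (f : V) (M : ℕ), (∀ i n, M ≤ n → A.pd i n f = 0) →
      ∀ i, ∑ n : Fin (N + 1), ∑ j, H n i j *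
        A.d^[(n : ℕ)] (∑ k ∈ Finset.range M, (-1 : V) ^ k * A.d^[k] (A.pd j k f)) = 0) :
    ∀ n, H n = 0 := by
  intro n0
  ext i j
  simp only [Matrix.zero_apply]
  -- choose a bound for the dependence of the coefficients H n i j
  have hdep : ∀ n : Fin (N + 1), ∃ B : ℕ, ∀ i' q, B ≤ q → A.pd i' q (H n i j) = 0 :=
    fun n => A.finite_dep (H n i j)
  choose B hB using hdep
  set m : ℕ := Finset.univ.sup B with hm
  have hmB : ∀ n : Fin (N + 1), B n ≤ m := fun n => Finset.le_sup (Finset.mem_univ n)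
  -- test function f = (d^[m] u_j)^2
  set x : V := A.d^[m] (A.u j) with hx
  set c : V := (-1 : V) ^ m * 2 with hc
  set f : V := x * x with hf
  -- partial derivatives of f
  have hpdf : ∀ (i' : Fin ℓ) (k : ℕ),
      A.pd i' k f = if i' = j ∧ k = m then 2 * x else 0 := by
    intro i' k
    rw [hf, A.pd_mul, hx, A.pd_u]
    by_cases h : i' = j ∧ k = m
    · rw [if_pos h, if_pos h]; ring
    · rw [if_neg h, if_neg h]; ring
  -- f depends only on variables of order ≤ m
  have hfd : ∀ i' n, m + 1 ≤ n → A.pd i' n f = 0 := by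
    intro i' n hn
    rw [hpdf]
    have h : ¬(i' = j ∧ n = m) := by rintro ⟨-, rfl⟩; omega
    simp [h]
  -- the variational derivative of f
  have hS : ∀ j' : Fin ℓ,
      (∑ k ∈ Finset.range (m + 1), (-1 : V) ^ k * A.d^[k] (A.pd j' k f))
        = if j' = j then c * A.d^[m + m] (A.u j) else 0 := by
    intro j'
    by_cases hj : j' = j
    · subst hj
      rw [if_pos rfl, Finset.sum_eq_single m]
      · rw [hpdf, if_pos ⟨rfl, rfl⟩, A.dit_const_mul A.d_two m x, hx,
          ← Function.iterate_add_apply, hc]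
        ring
      · intro k _ hk
        rw [hpdf]
        have h : ¬(j' = j' ∧ k = m) := by rintro ⟨-, rfl⟩; exact hk rfl
        rw [if_neg h, A.dit_zero, mul_zero]
      · intro h
        exact absurd (Finset.self_mem_range_succ m) h
    · rw [if_neg hj]
      apply Finset.sum_eq_zero
      intro k _
      rw [hpdf]
      have h : ¬(j' = j ∧ k = m) := fun h => hj h.1
      rw [if_neg h, A.dit_zero, mul_zero]
  -- the hypothesis applied to f
  have E := hH f (m + 1) hfd i
  -- simplify the inner sums
  have E2 : ∑ n : Fin (N + 1), H n i j * (c * A.d^[(n : ℕ) + (m + m)] (A.u j)) = 0 := by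
    rw [← E]
    apply Finset.sum_congr rfl
    intro n _
    rw [Finset.sum_eq_single j]
    · rw [hS, if_pos rfl, A.dit_const_mul (A.d_c m), ← Function.iterate_add_apply]
    · intro j' _ hj'
      rw [hS, if_neg hj', A.dit_zero, mul_zero]
    · intro h
      exact absurd (Finset.mem_univ j) h
  -- apply pd j (n0 + (m + m)) to the equation
  have E3 := congrArg (A.pdHom j ((n0 : ℕ) + (m + m))) E2
  rw [map_sum, map_zero] at E3
  have step : ∀ n ∈ (Finset.univ : Finset (Fin (N + 1))),
      (A.pdHom j ((n0 : ℕ) + (m + m))) (H n i j * (c * A.d^[(n : ℕ) + (m + m)] (A.u j)))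
        = H n i j * (c * if ((n0 : ℕ) + (m + m) = (n : ℕ) + (m + m)) then 1 else 0) := by
    intro n _
    rw [ADF.pdHom_apply, hc, A.pd_mul, hB n j ((n0 : ℕ) + (m + m)) (by
      have := hmB n; omega), zero_mul, zero_add,
      A.pd_mul, A.pd_c, zero_mul, zero_add, A.pd_u]
    simp only [eq_self_iff_true, true_and]
  have E4 : ∑ n : Fin (N + 1),
      H n i j * (c * if ((n0 : ℕ) + (m + m) = (n : ℕ) + (m + m)) then 1 else 0) = 0 :=
    (Finset.sum_congr rfl step).symm.trans E3
  rw [Finset.sum_eq_single n0] at E4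
  · rw [if_pos rfl, mul_one] at E4
    have hc0 : c ≠ 0 := by
      rw [hc]
      exact mul_ne_zero (pow_ne_zero _ (neg_ne_zero.mpr one_ne_zero)) two_ne_zero
    rcases mul_eq_zero.mp E4 with h | h
    · exact h
    · exact absurd h hc0
  · intro n _ hn
    have h : ¬((n0 : ℕ) + (m + m) = (n : ℕ) + (m + m)) := by
      intro h
      exact hn (Fin.val_injective (by omega : (n : ℕ) = (n0 : ℕ)))
    rw [if_neg h, mul_zero, mul_zero]
  · intro h
    exact absurd (Finset.mem_univ n0) h
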